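/- Let D ⊆ ℂ be open and connected with 0 ∉ D, Θ₀, Θ∞ ∈ ℂ, and let y, v, s, t : D → ℂ be differentiable (analytic) functions satisfying on D the system x·y' = −2x·s + Θ∞·y, x·v' = −2x·t·(s·t − x) − Θ∞·v, x·s' = (1 − Θ∞)·s − 2x·y + 4·y·s·t, x·t' = Θ∞·t − 2·y·t² + 2·v, with y and s nonvanishing on D, and suppose that the integral of motion satisfies (2Θ∞/x)·s(x)t(x) − Θ∞ − (2/x)·y(x)t(x)·(s(x)t(x) − x) + (2/x)·v(x)s(x) = Θ₀ for all x ∈ D. Then the function u := −y/s satisfies the generic Painlevé-III equation with parameters (Θ₀, Θ∞) on D. -/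

import Mathlib

open Complex

/-- The generic Painlevé-III equation with parameters `(Θ0, Θinf)` holds for the
function `u` at the point `x`. -/
def PIIIat (Θ0 Θinf : ℂ) (u : ℂ → ℂ) (x : ℂ) : Prop :=
  deriv (deriv u) x =
    (deriv u x) ^ 2 / u x - deriv u x / x
      + (4 * Θ0 * (u x) ^ 2 + 4 * (1 - Θinf)) / x
      + 4 * (u x) ^ 3 - 4 / u x

/-- The Painlevé-III potential system with parameter `Θinf` on the set `D`:
`y, v, s, t` are differentiable at every point of `D` and satisfy the coupled
first-order ODEs there. -/
def PIIIPotentialSystem (Θinf : ℂ) (D : Set ℂ) (y v s t : ℂ → ℂ) : Prop :=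
  ∀ x ∈ D,
    DifferentiableAt ℂ y x ∧ DifferentiableAt ℂ v x ∧
    DifferentiableAt ℂ s x ∧ DifferentiableAt ℂ t x ∧
    x * deriv y x = -2 * x * s x + Θinf * y x ∧
    x * deriv v x = -2 * x * t x * (s x * t x - x) - Θinf * v x ∧
    x * deriv s x = (1 - Θinf) * s x - 2 * x * y x + 4 * y x * s x * t x ∧
    x * deriv t x = Θinf * t x - 2 * y x * (t x) ^ 2 + 2 * v x

/-- Auxiliary: the first-derivative expression for `u = -y/s`. -/
noncomputable def Uaux (Θinf : ℂ) (y s t : ℂ → ℂ) : ℂ → ℂ := fun z =>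
  2 - (1 - 2*Θinf) * ((-y z / s z) / z) - 2 * (-y z / s z)^2
    + 4 * ((-y z / s z)^2 * (s z * t z) / z)

/-- Auxiliary: `u = -y/s` has derivative `Uaux` at points where the system holds. -/
lemma hasDerivAt_Uaux (Θinf : ℂ) (y s t : ℂ → ℂ) (x : ℂ) (hx0 : x ≠ 0)
    (hy : DifferentiableAt ℂ y x) (hs : DifferentiableAt ℂ s x)
    (hsnz : s x ≠ 0)
    (ody : x * deriv y x = -2 * x * s x + Θinf * y x)
    (ods : x * deriv s x = (1 - Θinf) * s x - 2 * x * y x + 4 * y x * s x * t x) :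
    HasDerivAt (fun z => -y z / s z) (Uaux Θinf y s t x) x := by
  have h := (hy.hasDerivAt.neg).div hs.hasDerivAt hsnz
  refine h.congr_deriv (Eq.symm ?_)
  have hdy : deriv y x = (-2 * x * s x + Θinf * y x) / x := by
    rw [eq_div_iff hx0]; linear_combination ody
  have hds : deriv s x = ((1 - Θinf) * s x - 2 * x * y x + 4 * y x * s x * t x) / x := by
    rw [eq_div_iff hx0]; linear_combination ods
  rw [hdy, hds, Pi.neg_apply]
  unfold Uaux
  field_simp
  ring

/-- Auxiliary: derivative of `s*t` using the system and the integral of motion. -/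
lemma hasDerivAt_P (Θ0 Θinf : ℂ) (y v s t : ℂ → ℂ) (x : ℂ) (hx0 : x ≠ 0)
    (hs : DifferentiableAt ℂ s x) (ht : DifferentiableAt ℂ t x)
    (hsnz : s x ≠ 0)
    (ods : x * deriv s x = (1 - Θinf) * s x - 2 * x * y x + 4 * y x * s x * t x)
    (odt : x * deriv t x = Θinf * t x - 2 * y x * (t x) ^ 2 + 2 * v x)
    (hI : (2 * Θinf / x) * s x * t x - Θinf
        - (2 / x) * y x * t x * (s x * t x - x) + (2 / x) * v x * s x = Θ0) :
    HasDerivAt (fun z => s z * t z)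
      (((1-2*Θinf)*(s x*t x) + 4*x*(-y x/s x)*(s x*t x)
        - 4*(-y x/s x)*(s x*t x)^2 + x*(Θ0+Θinf))/x) x := by
  have h := hs.hasDerivAt.mul ht.hasDerivAt
  refine h.congr_deriv (Eq.symm ?_)
  have hds : deriv s x = ((1 - Θinf) * s x - 2 * x * y x + 4 * y x * s x * t x) / x := by
    rw [eq_div_iff hx0]; linear_combination ods
  have hdt : deriv t x = (Θinf * t x - 2 * y x * (t x) ^ 2 + 2 * v x) / x := by
    rw [eq_div_iff hx0]; linear_combination odt
  have hI' : 2 * Θinf * (s x * t x) - Θinf * x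
      - 2 * y x * t x * (s x * t x - x) + 2 * v x * s x = Θ0 * x := by
    field_simp at hI; linear_combination hI
  rw [hds, hdt]
  field_simp
  linear_combination (-1 : ℂ) * hI'

/-- Auxiliary: the algebraic identity finishing the Painlevé-III computation. -/
lemma PIII_alg (Θ0 Θinf x a p U P' : ℂ) (hx : x ≠ 0) (ha : a ≠ 0)
    (hU : U = 2 - (1 - 2*Θinf) * (a / x) - 2 * a^2 + 4 * (a^2 * p / x))
    (hP : P' = ((1 - 2*Θinf) * p + 4 * x * a * p - 4 * a * p^2 + x * (Θ0 + Θinf)) / x) :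
    0 - (1 - 2*Θinf) * ((U * x - a * 1) / x ^ 2) - 2 * (2 * a * U)
      + 4 * (((2 * a * U * p + a ^ 2 * P') * x - a ^ 2 * p * 1) / x ^ 2)
    = U ^ 2 / a - U / x + (4 * Θ0 * a ^ 2 + 4 * (1 - Θinf)) / x + 4 * a ^ 3 - 4 / a := by
  have h2 : (x:ℂ)^2 ≠ 0 := pow_ne_zero _ hx
  have hU' : U * x = 2*x - (1 - 2*Θinf)*a - 2*a^2*x + 4*a^2*p := by
    rw [hU]; field_simp
  have hP'' : P' * x = (1 - 2*Θinf)*p + 4*x*a*p - 4*a*p^2 + x*(Θ0 + Θinf) := by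
    rw [hP]; field_simp
  have hL : 0 - (1 - 2*Θinf) * ((U * x - a * 1) / x ^ 2) - 2 * (2 * a * U)
      + 4 * (((2 * a * U * p + a ^ 2 * P') * x - a ^ 2 * p * 1) / x ^ 2)
      = (-(1 - 2*Θinf)*(U*x - a) - 4*a*U*x^2 + 4*((2*a*U*p + a^2*P')*x - a^2*p))/x^2 := by
    field_simp; ring
  have hR : U ^ 2 / a - U / x + (4 * Θ0 * a ^ 2 + 4 * (1 - Θinf)) / x + 4 * a ^ 3 - 4 / a
      = (U^2*x - U*a + (4*Θ0*a^2 + 4*(1 - Θinf))*a + 4*a^4*x - 4*x)/(a*x) := by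
    field_simp
  rw [hL, hR, div_eq_div_iff h2 (mul_ne_zero ha hx)]
  linear_combination ((-(1 - 2*Θinf))*a*x - 4*a^2*x^2 + 8*a^2*p*x + a*x - x*(U*x)
      - x*(2*x - (1 - 2*Θinf)*a - 2*a^2*x + 4*a^2*p)) * hU' + (4*a^3*x) * hP''

/-- If `(y, v, s, t)` solves the Painlevé-III potential system with `y, s`
nonvanishing, and the integral of motion equals `Θ0` on `D`, then `u = -y/s`
satisfies the generic Painlevé-III equation with parameters `(Θ0, Θinf)`. -/
theorem potential_system_gives_painleveIII (D : Set ℂ) (hD : IsOpen D)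
    (hconn : IsConnected D) (h0 : (0 : ℂ) ∉ D) (Θ0 Θinf : ℂ) (y v s t : ℂ → ℂ)
    (hsys : PIIIPotentialSystem Θinf D y v s t)
    (hynz : ∀ x ∈ D, y x ≠ 0)
    (hsnz : ∀ x ∈ D, s x ≠ 0)
    (hI : ∀ x ∈ D,
      (2 * Θinf / x) * s x * t x - Θinf
        - (2 / x) * y x * t x * (s x * t x - x) + (2 / x) * v x * s x = Θ0) :
    ∀ x ∈ D, PIIIat Θ0 Θinf (fun z => -y z / s z) x := by
  have key : ∀ z ∈ D, HasDerivAt (fun w => -y w / s w) (Uaux Θinf y s t z) z := by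
    intro z hz
    obtain ⟨hy, hv, hs, ht, ody, odv, ods, odt⟩ := hsys z hz
    have hz0 : z ≠ 0 := fun h => h0 (h ▸ hz)
    exact hasDerivAt_Uaux Θinf y s t z hz0 hy hs (hsnz z hz) ody ods
  intro x hx
  obtain ⟨hy, hv, hs, ht, ody, odv, ods, odt⟩ := hsys x hx
  have hx0 : x ≠ 0 := fun h => h0 (h ▸ hx)
  have hsx := hsnz x hx
  have hyx := hynz x hx
  have hux : (-y x / s x) ≠ 0 := div_ne_zero (neg_ne_zero.mpr hyx) hsx
  have hev : deriv (fun w => -y w / s w) =ᶠ[nhds x] Uaux Θinf y s t :=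
    (hD.eventually_mem hx).mono (fun z hz => (key z hz).deriv)
  unfold PIIIat
  rw [hev.deriv_eq]
  have hu : HasDerivAt (fun w => -y w / s w) (Uaux Θinf y s t x) x := key x hx
  set U := Uaux Θinf y s t x with hUdef
  set P' := ((1-2*Θinf)*(s x*t x) + 4*x*(-y x/s x)*(s x*t x)
        - 4*(-y x/s x)*(s x*t x)^2 + x*(Θ0+Θinf))/x with hP'def
  have hP : HasDerivAt (fun z => s z * t z) P' x :=
    hasDerivAt_P Θ0 Θinf y v s t x hx0 hs ht hsx ods odt (hI x hx)
  have hA : HasDerivAt (fun z => (-y z / s z) / z)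
      ((U * x - (-y x / s x) * 1) / x ^ 2) x := hu.div (hasDerivAt_id x) hx0
  have hB : HasDerivAt (fun z => (-y z / s z) ^ 2)
      (2 * (-y x / s x) * U) x := by
    have h := hu.pow 2
    refine h.congr_deriv (Eq.symm ?_)
    push_cast
    ring
  have hC : HasDerivAt (fun z => (-y z / s z) ^ 2 * (s z * t z))
      ((2 * (-y x / s x) * U) * (s x * t x) + (-y x / s x) ^ 2 * P') x :=
    hB.mul hP
  have hC' : HasDerivAt (fun z => (-y z / s z) ^ 2 * (s z * t z) / z)
      ((((2 * (-y x / s x) * U) * (s x * t x) + (-y x / s x) ^ 2 * P') * x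
        - (-y x / s x) ^ 2 * (s x * t x) * 1) / x ^ 2) x :=
    hC.div (hasDerivAt_id x) hx0
  have hU : HasDerivAt (Uaux Θinf y s t)
      (0 - (1 - 2*Θinf) * ((U * x - (-y x / s x) * 1) / x ^ 2)
        - 2 * (2 * (-y x / s x) * U)
        + 4 * ((((2 * (-y x / s x) * U) * (s x * t x) + (-y x / s x) ^ 2 * P') * x
          - (-y x / s x) ^ 2 * (s x * t x) * 1) / x ^ 2)) x :=
    (((hasDerivAt_const x (2:ℂ)).sub (hA.const_mul _)).sub
      (hB.const_mul 2)).add (hC'.const_mul 4)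
  rw [hU.deriv, hu.deriv]
  exact PIII_alg Θ0 Θinf x (-y x / s x) (s x * t x) U P' hx0 hux rfl rfl
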